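/- Forward witness soundness: for any set Σ, relations c, d, R, S on Σ, and any relation W on Σ×Σ, if W is f-valid, i.e. (WC) Ṙ ; W ⊆ Ṙ ; W ; Ṡ, (WO) Ṙ ; ⟨c] ⊆ W ; [hav⟩, and (WU) Ṙ ; W ⊆ ⟨hav | d⟩, then the forward simulation judgment c | d : R ⇒∃ S holds: for all σ, σ', τ with R σ σ' and c σ τ there exists τ' with d σ' τ' and S τ τ'. -/

import Mathlib

namespace BiKAT

variable {S : Type*}

/-- Relational composition: (A ; B) x z iff ∃ y, A x y ∧ B y z. -/
def rcomp {α : Type*} (A B : α → α → Prop) : α → α → Prop :=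
  fun x z => ∃ y, A x y ∧ B y z

/-- Union of relations. -/
def runion {α : Type*} (A B : α → α → Prop) : α → α → Prop :=
  fun x z => A x z ∨ B x z

/-- Reflexive-transitive closure. -/
def rstar {α : Type*} (A : α → α → Prop) : α → α → Prop :=
  Relation.ReflTransGen A

/-- Inclusion of relations, pointwise implication. -/
def rincl {α : Type*} (A B : α → α → Prop) : Prop := ∀ x y, A x y → B x y

/-- Test: sub-identity relation of a set. -/
def test (e : Set S) : S → S → Prop := fun x y => x ∈ e ∧ y = x

/-- Left embedding ⟨c]. -/
def lemb (c : S → S → Prop) : S × S → S × S → Prop :=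
  fun p q => c p.1 q.1 ∧ p.2 = q.2

/-- Right embedding [c⟩. -/
def remb (c : S → S → Prop) : S × S → S × S → Prop :=
  fun p q => c p.2 q.2 ∧ p.1 = q.1

/-- Two-argument embedding ⟨c|d⟩ := ⟨c] ; [d⟩. -/
def emb2 (c d : S → S → Prop) : S × S → S × S → Prop :=
  rcomp (lemb c) (remb d)

/-- Bitest Ṙ: sub-identity relation on Σ×Σ for a relation R on Σ. -/
def bitest (R : S → S → Prop) : S × S → S × S → Prop :=
  fun p q => R p.1 p.2 ∧ q.1 = p.1 ∧ q.2 = p.2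

/-- Havoc: the full relation. -/
def hav : S → S → Prop := fun _ _ => True

/-- while e do c := ([e];c)* ; [¬e]. -/
def wh (e : Set S) (c : S → S → Prop) : S → S → Prop :=
  rcomp (rstar (rcomp (test e) c)) (test eᶜ)

/-- The ∀∀ judgment c | d : R ≈> Sp. -/
def allall (c d R Sp : S → S → Prop) : Prop :=
  ∀ σ σ' τ τ', R σ σ' → c σ τ → d σ' τ' → Sp τ τ'

/-- Forward simulation judgment c | d : R ⇒∃ Sp. -/
def fsim (c d R Sp : S → S → Prop) : Prop :=
  ∀ σ σ' τ, R σ σ' → c σ τ → ∃ τ', d σ' τ' ∧ Sp τ τ'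

/-- Backward simulation judgment c | d : R ⇐∃ Sp. -/
def bsim (c d R Sp : S → S → Prop) : Prop :=
  ∀ σ τ τ', c σ τ → Sp τ τ' → ∃ σ', R σ σ' ∧ d σ' τ'

/-- Triple (componentwise) embedding ⟪a|b|c⟫ on Σ×Σ×Σ. -/
def tri (a b c : S → S → Prop) : S × S × S → S × S × S → Prop :=
  fun p q => a p.1 q.1 ∧ b p.2.1 q.2.1 ∧ c p.2.2 q.2.2

/-- ⟦A ∥ B⟧: pairs of BiKAT elements agreeing on the middle execution. -/
def tpair (A B : S × S → S × S → Prop) : S × S × S → S × S × S → Prop :=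
  fun p q => A (p.1, p.2.1) (q.1, q.2.1) ∧ B (p.2.1, p.2.2) (q.2.1, q.2.2)

/-- ⇙X: projection to the left two of three. -/
def proj2 (X : S × S × S → S × S × S → Prop) : S × S → S × S → Prop :=
  fun p q => ∃ s t, X (p.1, p.2, s) (q.1, q.2, t)

theorem rcomp_bitest_left_iff {R : S → S → Prop} {A : S × S → S × S → Prop} {p q : S × S} :
    rcomp (bitest R) A p q ↔ R p.1 p.2 ∧ A p q := by
  constructor
  · rintro ⟨r, ⟨hR, h1, h2⟩, hA⟩
    obtain rfl : r = p := Prod.ext h1 h2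
    exact ⟨hR, hA⟩
  · rintro ⟨hR, hA⟩
    exact ⟨p, ⟨hR, rfl, rfl⟩, hA⟩

theorem rcomp_bitest_right_iff {A : S × S → S × S → Prop} {R : S → S → Prop} {p q : S × S} :
    rcomp A (bitest R) p q ↔ A p q ∧ R q.1 q.2 := by
  constructor
  · rintro ⟨r, hA, hR, h1, h2⟩
    obtain rfl : q = r := Prod.ext h1 h2
    exact ⟨hA, hR⟩
  · rintro ⟨hA, hR⟩
    exact ⟨q, hA, hR, rfl, rfl⟩

theorem emb2_iff {c d : S → S → Prop} {p q : S × S} :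
    emb2 c d p q ↔ c p.1 q.1 ∧ d p.2 q.2 := by
  constructor
  · rintro ⟨r, ⟨hc, h2⟩, hd, h1⟩
    exact ⟨h1 ▸ hc, h2 ▸ hd⟩
  · rintro ⟨hc, hd⟩
    exact ⟨(q.1, p.2), ⟨hc, rfl⟩, hd, rfl⟩

theorem rcomp_remb_hav_iff {A : S × S → S × S → Prop} {p q : S × S} :
    rcomp A (remb hav) p q ↔ ∃ y, A p (q.1, y) := by
  constructor
  · rintro ⟨r, hA, -, h1⟩
    exact ⟨r.2, h1 ▸ hA⟩
  · rintro ⟨y, hA⟩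
    exact ⟨(q.1, y), hA, trivial, rfl⟩

end BiKAT

open BiKAT

/-- Forward witness soundness. -/
theorem stmt13 (S : Type*) (c d R Sp : S → S → Prop) (W : S × S → S × S → Prop)
    (hWC : rincl (rcomp (bitest R) W) (rcomp (rcomp (bitest R) W) (bitest Sp)))
    (hWO : rincl (rcomp (bitest R) (lemb c)) (rcomp W (remb hav)))
    (hWU : rincl (rcomp (bitest R) W) (emb2 hav d)) :
    fsim c d R Sp := by
  intro σ σ' τ hR hc
  obtain ⟨τ', hW⟩ : ∃ τ', W (σ, σ') (τ, τ') :=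
    rcomp_remb_hav_iff.1 (hWO (σ, σ') (τ, σ') (rcomp_bitest_left_iff.2 ⟨hR, hc, rfl⟩))
  have hRW : rcomp (bitest R) W (σ, σ') (τ, τ') := rcomp_bitest_left_iff.2 ⟨hR, hW⟩
  exact ⟨τ', (emb2_iff.1 (hWU _ _ hRW)).2, (rcomp_bitest_right_iff.1 (hWC _ _ hRW)).2⟩
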